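/- arXiv:1903.07915 — 4 statements merged into one kernel-verified Lean document; each statement's English description precedes it below -/
import Mathlib

section
/- If a probability measure μ on ℝ^d satisfies the Gaussian concentration bound with constant D (i.e., log ∫ e^{f - μ(f)} dμ ≤ D·Lip(f)² for all Lipschitz f), then there exists x₀ ∈ ℝ^d such that ∫ exp(‖x - x₀‖²/(16D)) dμ(x) ≤ 3·exp(m²/D), where m = ∫ ‖x - x₀‖ dμ(x). -/
/-!
For `t : ℝ`, `exp (t² / (16 D)) = √(4D/π) ∫ exp (t l - 4 D l²) dl`. By Tonelli, the Gaussian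
moment of a `1`-Lipschitz function `g` is therefore a Gaussian average over `l` of the exponential
moments `∫ exp (l g) dμ`, and the concentration bound applied to `l g` gives
`∫ exp (l g) dμ ≤ exp (l ∫ g dμ + D l²)`. The remaining integral over `l` is again Gaussian and
equals `(2 / √3) exp ((∫ g dμ)² / (12 D))`. The theorem is the case `g = ‖·‖`, `x₀ = 0`.
-/

open MeasureTheory Real
open scoped ENNReal NNReal

theorem lintegral_exp_neg_mul_sq {a : ℝ} (ha : 0 < a) :
    ∫⁻ l : ℝ, ENNReal.ofReal (exp (-a * l ^ 2)) = ENNReal.ofReal √(π / a) := by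
  rw [← ofReal_integral_eq_lintegral_ofReal (integrable_exp_neg_mul_sq ha)
    (ae_of_all _ fun _ => (exp_pos _).le), integral_gaussian]

theorem lintegral_exp_mul_sub_mul_sq {a : ℝ} (ha : 0 < a) (t : ℝ) :
    ∫⁻ l : ℝ, ENNReal.ofReal (exp (t * l - a * l ^ 2)) =
      ENNReal.ofReal (exp (t ^ 2 / (4 * a)) * √(π / a)) := by
  have hsquare : ∀ l, exp (t * l - a * l ^ 2) =
      exp (t ^ 2 / (4 * a)) * exp (-a * (l - t / (2 * a)) ^ 2) := by
    intro l
    rw [← exp_add]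
    congr 1
    field_simp
    ring
  simp_rw [hsquare, ENNReal.ofReal_mul (exp_pos _).le]
  rw [lintegral_const_mul' _ _ ENNReal.ofReal_ne_top,
    lintegral_sub_right_eq_self (fun l => ENNReal.ofReal (exp (-a * l ^ 2))),
    lintegral_exp_neg_mul_sq ha]

/-- The bound `GCB(D)`, without its first-moment condition. -/
def GaussianConcentration {α : Type*} [PseudoMetricSpace α] [MeasurableSpace α]
    (μ : Measure α) (D : ℝ) : Prop :=
  ∀ (L : ℝ≥0) (f : α → ℝ), LipschitzWith L f →
    ∫ x, exp (f x - ∫ y, f y ∂μ) ∂μ ≤ exp (D * (L : ℝ) ^ 2)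

namespace GaussianConcentration

variable {α : Type*} [PseudoMetricSpace α] [MeasurableSpace α] [OpensMeasurableSpace α]
  {μ : Measure α} [IsFiniteMeasure μ] {D : ℝ}

theorem lintegral_exp_le_of_le (h : GaussianConcentration μ D) {L : ℝ≥0} {f : α → ℝ}
    (hf : LipschitzWith L f) {C : ℝ} (hC : ∀ x, f x ≤ C) :
    ∫⁻ x, ENNReal.ofReal (exp (f x)) ∂μ ≤ ENNReal.ofReal (exp (∫ x, f x ∂μ + D * L ^ 2)) := by
  set c := ∫ x, f x ∂μ
  have hint : Integrable (fun x => exp (f x - c)) μ := by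
    have := hf.continuous
    refine Integrable.of_bound (by fun_prop) (exp (C - c)) (ae_of_all _ fun x => ?_)
    rw [norm_of_nonneg (exp_pos _).le]
    gcongr
    exact hC x
  calc ∫⁻ x, ENNReal.ofReal (exp (f x)) ∂μ
      = ∫⁻ x, ENNReal.ofReal (exp c) * ENNReal.ofReal (exp (f x - c)) ∂μ := by
        simp_rw [← ENNReal.ofReal_mul (exp_pos _).le, ← exp_add, add_sub_cancel]
    _ = ENNReal.ofReal (exp c) * ENNReal.ofReal (∫ x, exp (f x - c) ∂μ) := by
        rw [lintegral_const_mul' _ _ ENNReal.ofReal_ne_top, ofReal_integral_eq_lintegral_ofReal hint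
          (ae_of_all _ fun _ => (exp_pos _).le)]
    _ ≤ ENNReal.ofReal (exp c) * ENNReal.ofReal (exp (D * L ^ 2)) := by
        gcongr
        exact h L f hf
    _ = ENNReal.ofReal (exp (c + D * L ^ 2)) := by
        rw [← ENNReal.ofReal_mul (exp_pos _).le, ← exp_add]

/-- Truncating `f` from above makes `exp (f - ∫ f)` integrable, so that the concentration
bound is not about the junk value `0` of a non-integrable Bochner integral. -/
theorem lintegral_exp_le (h : GaussianConcentration μ D) {L : ℝ≥0} {f : α → ℝ}
    (hf : LipschitzWith L f) (hfi : Integrable f μ) :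
    ∫⁻ x, ENNReal.ofReal (exp (f x)) ∂μ ≤ ENNReal.ofReal (exp (∫ x, f x ∂μ + D * L ^ 2)) := by
  have htrunc : ∀ x, ENNReal.ofReal (exp (f x)) = ⨆ N : ℕ, ENNReal.ofReal (exp (min (f x) N)) :=
    fun x => le_antisymm (le_iSup_of_le ⌈f x⌉₊ (by rw [min_eq_left (Nat.le_ceil _)]))
      (iSup_le fun N => by gcongr; exact min_le_left _ _)
  simp_rw [htrunc]
  rw [lintegral_iSup (fun N => by have := hf.continuous; fun_prop)
    (fun N M hNM x => by dsimp only; gcongr)]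
  refine iSup_le fun N =>
    (h.lintegral_exp_le_of_le (hf.min_const N) fun x => min_le_right _ _).trans ?_
  have hmono : ∫ x, min (f x) N ∂μ ≤ ∫ x, f x ∂μ :=
    integral_mono (hfi.inf (integrable_const _)) hfi fun x => min_le_left _ _
  gcongr

theorem lintegral_exp_sq_le (h : GaussianConcentration μ D) (hD : 0 < D) {g : α → ℝ}
    (hg : LipschitzWith 1 g) (hgi : Integrable g μ) :
    ∫⁻ x, ENNReal.ofReal (exp (g x ^ 2 / (16 * D))) ∂μ ≤
      ENNReal.ofReal (2 / √3 * exp ((∫ x, g x ∂μ) ^ 2 / (12 * D))) := by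
  set m := ∫ x, g x ∂μ
  have hgauss : ∀ t, ENNReal.ofReal (exp (t ^ 2 / (16 * D))) =
      ENNReal.ofReal √(4 * D / π) * ∫⁻ l : ℝ, ENNReal.ofReal (exp (t * l - 4 * D * l ^ 2)) := by
    intro t
    rw [lintegral_exp_mul_sub_mul_sq (by positivity), ← ENNReal.ofReal_mul (by positivity)]
    have hsqrt : √(4 * D / π) * √(π / (4 * D)) = 1 := by
      rw [← sqrt_mul (by positivity), div_mul_div_cancel₀ (by positivity), div_self (by positivity),
        sqrt_one]
    rw [mul_left_comm, hsqrt, mul_one]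
    ring_nf
  have hmgf : ∀ l : ℝ, ∫⁻ x, ENNReal.ofReal (exp (l * g x)) ∂μ ≤
      ENNReal.ofReal (exp (l * m + D * l ^ 2)) := by
    intro l
    simpa [m, integral_const_mul] using
      h.lintegral_exp_le ((lipschitzWith_smul l).comp hg) (hgi.const_mul l)
  have hmeas : AEMeasurable (Function.uncurry fun x (l : ℝ) =>
      ENNReal.ofReal (exp (g x * l - 4 * D * l ^ 2))) (μ.prod volume) := by
    have := hg.continuous.measurable
    unfold Function.uncurry
    fun_prop
  calc ∫⁻ x, ENNReal.ofReal (exp (g x ^ 2 / (16 * D))) ∂μ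
      = ENNReal.ofReal √(4 * D / π) *
          ∫⁻ l : ℝ, ∫⁻ x, ENNReal.ofReal (exp (g x * l - 4 * D * l ^ 2)) ∂μ := by
        simp_rw [hgauss]
        rw [lintegral_const_mul' _ _ ENNReal.ofReal_ne_top, lintegral_lintegral_swap hmeas]
    _ = ENNReal.ofReal √(4 * D / π) * ∫⁻ l : ℝ, ENNReal.ofReal (exp (-(4 * D) * l ^ 2)) *
          ∫⁻ x, ENNReal.ofReal (exp (l * g x)) ∂μ := by
        congr 1
        refine lintegral_congr fun l => ?_
        rw [← lintegral_const_mul' _ _ ENNReal.ofReal_ne_top]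
        refine lintegral_congr fun x => ?_
        rw [← ENNReal.ofReal_mul (exp_pos _).le, ← exp_add]
        congr 2
        ring
    _ ≤ ENNReal.ofReal √(4 * D / π) * ∫⁻ l : ℝ, ENNReal.ofReal (exp (-(4 * D) * l ^ 2)) *
          ENNReal.ofReal (exp (l * m + D * l ^ 2)) := by
        gcongr with l
        exact hmgf l
    _ = ENNReal.ofReal √(4 * D / π) *
          ∫⁻ l : ℝ, ENNReal.ofReal (exp (m * l - 3 * D * l ^ 2)) := by
        congr 1
        refine lintegral_congr fun l => ?_
        rw [← ENNReal.ofReal_mul (exp_pos _).le, ← exp_add]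
        congr 2
        ring
    _ = ENNReal.ofReal (2 / √3 * exp (m ^ 2 / (12 * D))) := by
        rw [lintegral_exp_mul_sub_mul_sq (by positivity), ← ENNReal.ofReal_mul (by positivity)]
        have hsqrt : √(4 * D / π) * √(π / (3 * D)) = 2 / √3 := by
          rw [← sqrt_mul (by positivity), show 4 * D / π * (π / (3 * D)) = 2 ^ 2 / 3 by
            field_simp; ring, sqrt_div (by positivity), sqrt_sq zero_le_two]
        rw [mul_left_comm, hsqrt]
        ring_nf

end GaussianConcentration

/-- If a probability measure on ℝ^d satisfies the Gaussian concentration bound with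
constant `D`, then there exists `x₀` such that
`∫ exp(‖x-x₀‖²/(16D)) dμ ≤ 3 exp(m²/D)` with `m = ∫ ‖x-x₀‖ dμ`. -/
theorem gcb_implies_gaussian_moment {d : ℕ}
    (μ : Measure (EuclideanSpace ℝ (Fin d))) [IsProbabilityMeasure μ]
    (D : ℝ) (hD : 0 < D)
    (hInt : Integrable (fun x => ‖x‖) μ)
    (hGCB : ∀ (L : NNReal) (f : EuclideanSpace ℝ (Fin d) → ℝ), LipschitzWith L f →
      ∫ x, Real.exp (f x - ∫ y, f y ∂μ) ∂μ ≤ Real.exp (D * (L : ℝ) ^ 2)) :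
    ∃ x₀ : EuclideanSpace ℝ (Fin d),
      ∫⁻ x, ENNReal.ofReal (Real.exp (‖x - x₀‖ ^ 2 / (16 * D))) ∂μ ≤
        ENNReal.ofReal (3 * Real.exp ((∫ x, ‖x - x₀‖ ∂μ) ^ 2 / D)) := by
  refine ⟨0, ?_⟩
  simp only [sub_zero]
  refine (GaussianConcentration.lintegral_exp_sq_le hGCB hD lipschitzWith_one_norm hInt).trans ?_
  have hconstant : 2 / √3 ≤ 3 := by
    rw [div_le_iff₀ (by positivity)]
    nlinarith [Real.sq_sqrt (show (0 : ℝ) ≤ 3 by norm_num), Real.sqrt_nonneg 3]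
  gcongr
  linarith
end

section
/- If a probability measure μ on a separable metric space (Ω,d) satisfies ∫ e^{a·d(x₀,x)²} dμ(x) ≤ b for some point x₀, some a > 0 and b ≥ 1, then μ satisfies the Gaussian concentration bound with constant D = (1/(2a))·max(1, b²e/(2√π)), i.e., ∫ e^{f - μ(f)} dμ ≤ e^{D·Lip(f)²} for all Lipschitz f. -/
open MeasureTheory Real

/-!
Put `g = f - f x₀`, so that `|g| ≤ L d(x₀, ·)`. By Jensen `exp (-∫ g) ≤ ∫ exp (-g)`, hence
`∫ exp (f - ∫ f) ≤ (∫ exp g) (∫ exp (-g)) ≤ (∫ cosh g)²`. Pointwise,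
`cosh (2uy) - 1 = 2 sinh² (uy) ≤ 2 (exp (uy) - 1)² ≤ 2 (exp u² - 1) (exp y² - 1)`, the last
step being Cauchy–Schwarz for the exponential series. With `u = L / (2√a)` and `y = √a d(x₀, ·)`
this gives `∫ cosh g ≤ 1 + 2 (b - 1) (exp u² - 1)`, which Bernoulli's inequality bounds by
`exp (M u²)` for every `M ≥ max 1 (2 (b - 1))`; the stated constant qualifies because `√π ≤ e`
and `4 (b - 1) ≤ b²`.
-/

namespace Real

theorem hasSum_pow_succ_div_factorial (y : ℝ) :
    HasSum (fun k : ℕ => y ^ (k + 1) / (k + 1).factorial) (exp y - 1) := by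
  have h := NormedSpace.expSeries_div_hasSum_exp y
  rw [← exp_eq_exp_ℝ, ← hasSum_nat_add_iff' 1] at h
  simpa using h

theorem sq_exp_mul_sub_one_le (u x : ℝ) :
    (exp (u * x) - 1) ^ 2 ≤ (exp (u ^ 2) - 1) * (exp (x ^ 2) - 1) := by
  refine le_of_tendsto_of_tendsto'
    ((hasSum_pow_succ_div_factorial (u * x)).tendsto_sum_nat.pow 2)
    ((hasSum_pow_succ_div_factorial (u ^ 2)).tendsto_sum_nat.mul
      (hasSum_pow_succ_div_factorial (x ^ 2)).tendsto_sum_nat) fun n => ?_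
  refine Finset.sum_sq_le_sum_mul_sum_of_sq_le_mul _ (fun k _ => by positivity)
    (fun k _ => by positivity) fun k _ => le_of_eq ?_
  ring

theorem sinh_le_exp_sub_one (z : ℝ) : sinh z ≤ exp z - 1 := by
  linarith [cosh_add_sinh z, one_le_cosh z]

theorem cosh_two_mul_sub_one_le (u x : ℝ) :
    cosh (2 * (u * x)) - 1 ≤ 2 * ((exp (u ^ 2) - 1) * (exp (x ^ 2) - 1)) := by
  have hsinh : sinh (u * x) ^ 2 ≤ (exp (|u| * |x|) - 1) ^ 2 := by
    rw [← sq_abs, abs_sinh, abs_mul]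
    exact pow_le_pow_left₀ (sinh_nonneg_iff.mpr (by positivity)) (sinh_le_exp_sub_one _) 2
  have hCS := sq_exp_mul_sub_one_le |u| |x|
  rw [sq_abs, sq_abs] at hCS
  rw [cosh_two_mul, cosh_sq]
  linarith

theorem cosh_mul_sub_one_le {a : ℝ} (ha : 0 < a) (ℓ s : ℝ) :
    cosh (ℓ * s) - 1 ≤ 2 * ((exp (ℓ ^ 2 / (4 * a)) - 1) * (exp (a * s ^ 2) - 1)) := by
  have hsa : √a ^ 2 = a := sq_sqrt ha.le
  have hsa0 : √a ≠ 0 := (sqrt_pos.mpr ha).ne'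
  have key := cosh_two_mul_sub_one_le (ℓ / (2 * √a)) (√a * s)
  have hℓs : 2 * (ℓ / (2 * √a) * (√a * s)) = ℓ * s := by field_simp
  have hu : (ℓ / (2 * √a)) ^ 2 = ℓ ^ 2 / (4 * a) := by rw [div_pow, mul_pow, hsa]; ring
  have hx : (√a * s) ^ 2 = a * s ^ 2 := by rw [mul_pow, hsa]
  rwa [hℓs, hu, hx] at key

theorem exp_le_two_mul_cosh (z : ℝ) : exp z ≤ 2 * cosh z := by
  rw [cosh_eq]; linarith [exp_pos (-z)]

theorem abs_le_two_mul_cosh (z : ℝ) : |z| ≤ 2 * cosh z := by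
  rw [abs_le]
  constructor <;> linarith [add_one_le_exp z, add_one_le_exp (-z), exp_le_two_mul_cosh z,
    exp_le_two_mul_cosh (-z), cosh_neg z]

theorem one_add_mul_exp_sub_one_le_exp_mul {M : ℝ} (hM : 1 ≤ M) (y : ℝ) :
    1 + M * (exp y - 1) ≤ exp (M * y) := by
  have := one_add_mul_self_le_rpow_one_add (s := exp y - 1) (by linarith [exp_pos y]) hM
  rwa [add_sub_cancel, ← exp_mul, mul_comm y] at this

theorem sqrt_pi_le_exp_one : √π ≤ exp 1 := by
  rw [sqrt_le_left (exp_pos 1).le]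
  nlinarith [pi_lt_d2, exp_one_gt_d9]

theorem two_mul_sub_one_le_sq_mul_exp_one_div (b : ℝ) :
    2 * (b - 1) ≤ b ^ 2 * exp 1 / (2 * √π) := by
  rw [le_div_iff₀ (by positivity)]
  nlinarith [sq_nonneg (b - 2), sqrt_nonneg π, mul_le_mul_of_nonneg_left sqrt_pi_le_exp_one (sq_nonneg b)]

end Real

section

variable {Ω : Type*} [MeasurableSpace Ω] {μ : Measure Ω}

theorem integrable_and_integral_le_of_lintegral_ofReal_le {F : Ω → ℝ} {b : ℝ}
    (hF : AEStronglyMeasurable F μ) (hF0 : 0 ≤ᵐ[μ] F) (hb : 0 ≤ b)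
    (h : ∫⁻ x, ENNReal.ofReal (F x) ∂μ ≤ ENNReal.ofReal b) :
    Integrable F μ ∧ ∫ x, F x ∂μ ≤ b := by
  refine ⟨⟨hF, (hasFiniteIntegral_iff_ofReal hF0).mpr (h.trans_lt ENNReal.ofReal_lt_top)⟩, ?_⟩
  rw [integral_eq_lintegral_of_nonneg_ae hF0 hF]
  exact ENNReal.toReal_le_of_le_ofReal hb h

theorem integral_exp_sub_integral_le_sq_integral_cosh [IsProbabilityMeasure μ] {f : Ω → ℝ}
    (c : ℝ) (hf : AEStronglyMeasurable f μ) (hcosh : Integrable (fun x => cosh (f x - c)) μ) :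
    ∫ x, exp (f x - ∫ y, f y ∂μ) ∂μ ≤ (∫ x, cosh (f x - c) ∂μ) ^ 2 := by
  have hdom {φ : ℝ → ℝ} (hφ : Continuous φ) (hφ_le : ∀ z, |φ z| ≤ 2 * cosh z) :
      Integrable (fun x => φ (f x - c)) μ :=
    (hcosh.const_mul 2).mono' (hφ.comp_aestronglyMeasurable (hf.sub aestronglyMeasurable_const))
      (.of_forall fun x => hφ_le _)
  have hP := hdom continuous_exp fun z => by
    rw [abs_of_pos (exp_pos z)]; exact exp_le_two_mul_cosh z
  have hQ := hdom (φ := fun z => exp (-z)) (by fun_prop) fun z => by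
    rw [abs_of_pos (exp_pos _), ← cosh_neg z]; exact exp_le_two_mul_cosh (-z)
  have hg := hdom continuous_id abs_le_two_mul_cosh
  have hjensen : exp (c - ∫ y, f y ∂μ) ≤ ∫ x, exp (-(f x - c)) ∂μ := by
    have hfi : Integrable f μ :=
      (hg.add (integrable_const c)).congr (.of_forall fun x => sub_add_cancel (f x) c)
    have hmean : ∫ x, -(f x - c) ∂μ = c - ∫ y, f y ∂μ := by
      rw [integral_neg, integral_sub hfi (integrable_const c), integral_const, probReal_univ,
        one_smul, neg_sub]
    rw [← hmean]
    exact convexOn_exp.map_integral_le continuousOn_exp isClosed_univ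
      (.of_forall fun _ => Set.mem_univ _) hg.neg hQ
  have hsplit : ∫ x, exp (f x - ∫ y, f y ∂μ) ∂μ
      = exp (c - ∫ y, f y ∂μ) * ∫ x, exp (f x - c) ∂μ := by
    rw [← integral_const_mul]
    congr 1 with x
    rw [← exp_add]; ring_nf
  have hcosh_eq : ∫ x, cosh (f x - c) ∂μ
      = ((∫ x, exp (f x - c) ∂μ) + ∫ x, exp (-(f x - c)) ∂μ) / 2 := by
    rw [← integral_add hP hQ, ← integral_div]
    simp only [cosh_eq]
  have hP0 : 0 ≤ ∫ x, exp (f x - c) ∂μ := integral_nonneg fun x => (exp_pos _).le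
  rw [hsplit, hcosh_eq]
  nlinarith [mul_le_mul_of_nonneg_right hjensen hP0,
    sq_nonneg ((∫ x, exp (f x - c) ∂μ) - ∫ x, exp (-(f x - c)) ∂μ)]

theorem integrable_cosh_and_integral_cosh_le [IsProbabilityMeasure μ] {h s : Ω → ℝ} {a : ℝ}
    (ha : 0 < a) (ℓ : ℝ) (hh : AEStronglyMeasurable h μ) (hhs : ∀ x, |h x| ≤ ℓ * s x)
    (hE : Integrable (fun x => exp (a * s x ^ 2)) μ) :
    Integrable (fun x => cosh (h x)) μ ∧ ∫ x, cosh (h x) ∂μ ≤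
      1 + 2 * ((exp (ℓ ^ 2 / (4 * a)) - 1) * ((∫ x, exp (a * s x ^ 2) ∂μ) - 1)) := by
  set t := exp (ℓ ^ 2 / (4 * a))
  have hE' : Integrable (fun x => 2 * ((t - 1) * (exp (a * s x ^ 2) - 1))) μ :=
    ((hE.sub (integrable_const 1)).const_mul (t - 1)).const_mul 2
  have hB : Integrable (fun x => 1 + 2 * ((t - 1) * (exp (a * s x ^ 2) - 1))) μ :=
    (integrable_const 1).add hE'
  have hcosh_le : ∀ x, cosh (h x) ≤ 1 + 2 * ((t - 1) * (exp (a * s x ^ 2) - 1)) := fun x =>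
    (cosh_le_cosh.mpr ((hhs x).trans (le_abs_self _))).trans
      (by linarith [cosh_mul_sub_one_le ha ℓ (s x)])
  have hcosh : Integrable (fun x => cosh (h x)) μ :=
    hB.mono' (continuous_cosh.comp_aestronglyMeasurable hh)
      (.of_forall fun x => by rw [norm_of_nonneg (cosh_pos _).le]; exact hcosh_le x)
  refine ⟨hcosh, (integral_mono hcosh hB hcosh_le).trans_eq ?_⟩
  rw [integral_add (integrable_const _) hE', integral_const_mul, integral_const_mul,
    integral_sub hE (integrable_const _)]
  simp

end

theorem gaussian_moment_implies_gcb_general {Ω : Type*} [MetricSpace Ω]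
    [MeasurableSpace Ω] [BorelSpace Ω]
    (μ : Measure Ω) [IsProbabilityMeasure μ] (x₀ : Ω) (a b : ℝ)
    (ha : 0 < a) (hb : 1 ≤ b)
    (hmom : ∫⁻ x, ENNReal.ofReal (Real.exp (a * dist x₀ x ^ 2)) ∂μ ≤ ENNReal.ofReal b) :
    ∀ (L : NNReal) (f : Ω → ℝ), LipschitzWith L f →
      ∫ x, Real.exp (f x - ∫ y, f y ∂μ) ∂μ ≤
        Real.exp ((1 / (2 * a)) * max 1 (b ^ 2 * Real.exp 1 / (2 * Real.sqrt Real.pi))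
          * (L : ℝ) ^ 2) := by
  intro L f hf
  obtain ⟨hE, hEb⟩ := integrable_and_integral_le_of_lintegral_ofReal_le
    (by fun_prop : Continuous fun x => exp (a * dist x₀ x ^ 2)).aestronglyMeasurable
    (.of_forall fun x => (exp_pos _).le) (by linarith) hmom
  have hg : Continuous fun x => f x - f x₀ := hf.continuous.sub continuous_const
  obtain ⟨hcosh, hcosh_le⟩ := integrable_cosh_and_integral_cosh_le ha L hg.aestronglyMeasurable
    (fun x => by rw [← Real.dist_eq, dist_comm x₀]; exact hf.dist_le_mul x x₀) hE
  set M := max 1 (b ^ 2 * exp 1 / (2 * √π))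
  have hint : ∫ x, cosh (f x - f x₀) ∂μ ≤ exp (M * ((L : ℝ) ^ 2 / (4 * a))) := by
    have ht : 1 ≤ exp ((L : ℝ) ^ 2 / (4 * a)) := one_le_exp (by positivity)
    refine hcosh_le.trans (le_trans ?_ (one_add_mul_exp_sub_one_le_exp_mul (le_max_left _ _) _))
    nlinarith [hEb, (two_mul_sub_one_le_sq_mul_exp_one_div b).trans (le_max_right 1 _)]
  calc ∫ x, exp (f x - ∫ y, f y ∂μ) ∂μ ≤ (∫ x, cosh (f x - f x₀) ∂μ) ^ 2 :=
        integral_exp_sub_integral_le_sq_integral_cosh (f x₀) hf.continuous.aestronglyMeasurable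
          hcosh
    _ ≤ exp (M * ((L : ℝ) ^ 2 / (4 * a))) ^ 2 :=
        pow_le_pow_left₀ (integral_nonneg fun x => (cosh_pos _).le) hint 2
    _ = exp (1 / (2 * a) * M * (L : ℝ) ^ 2) := by
        rw [← exp_nat_mul]; congr 1; field_simp; ring

/-- If a probability measure on a separable metric space has a Gaussian moment
`∫ exp(a·d(x₀,x)²) dμ ≤ b` (`a > 0`, `b ≥ 1`), then it satisfies the Gaussian
concentration bound with constant `D = (1/(2a))·max(1, b²e/(2√π))`. -/
theorem gaussian_moment_implies_gcb {Ω : Type*} [MetricSpace Ω]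
    [TopologicalSpace.SeparableSpace Ω] [MeasurableSpace Ω] [BorelSpace Ω]
    (μ : Measure Ω) [IsProbabilityMeasure μ] (x₀ : Ω) (a b : ℝ)
    (ha : 0 < a) (hb : 1 ≤ b)
    (hmom : ∫⁻ x, ENNReal.ofReal (Real.exp (a * dist x₀ x ^ 2)) ∂μ ≤ ENNReal.ofReal b) :
    ∀ (L : NNReal) (f : Ω → ℝ), LipschitzWith L f →
      ∫ x, Real.exp (f x - ∫ y, f y ∂μ) ∂μ ≤
        Real.exp ((1 / (2 * a)) * max 1 (b ^ 2 * Real.exp 1 / (2 * Real.sqrt Real.pi))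
          * (L : ℝ) ^ 2) :=
  gaussian_moment_implies_gcb_general μ x₀ a b ha hb hmom
end

section
/- Let μ be a probability measure on a separable Banach space Ω. If μ satisfies the Gaussian concentration bound with constant D for all bounded Lipschitz functions, then μ satisfies it with the same constant D for all Lipschitz functions f : Ω → ℝ (in particular e^{±f} are μ-integrable and ∫ e^{f-μ(f)} dμ ≤ e^{D·Lip(f)²}). -/
open MeasureTheory Real Filter Topology

/-!
Apply the hypothesis to the truncations `f_n = (f ∧ n) ∨ (-n)`, which are bounded and
`L`-Lipschitz. Used for `f_n` and `-f_n` it gives `∫ e^{f_n} · ∫ e^{-f_n} ≤ e^{2DL²}`, and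
`∫ e^{-f_n} ≥ ∫ e^{-|f|} > 0`, so `∫ e^{f_n}` is bounded uniformly in `n`. Fatou's lemma then
puts `e^f` in `L¹`, likewise `e^{-f}`, and hence `f` since `|f| ≤ e^f + e^{-f}`. Dominated
convergence (with dominating functions `|f|` and `e^f + e^{-f}`) passes the bound for `f_n` to
the limit.
-/

def clip (n : ℕ) (t : ℝ) : ℝ := max (-n) (min t n)

lemma abs_clip_le_natCast (n : ℕ) (t : ℝ) : |clip n t| ≤ n := by
  have : (0 : ℝ) ≤ n := n.cast_nonneg
  grind [clip, abs_le]

lemma abs_clip_le_abs (n : ℕ) (t : ℝ) : |clip n t| ≤ |t| := by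
  grind [clip, abs_le]

lemma clip_of_abs_le {n : ℕ} {t : ℝ} (h : |t| ≤ n) : clip n t = t := by
  rw [abs_le] at h
  rw [clip, min_eq_left h.2, max_eq_right h.1]

lemma tendsto_clip (t : ℝ) : Tendsto (fun n : ℕ => clip n t) atTop (𝓝 t) :=
  tendsto_const_nhds.congr' <| (eventually_ge_atTop ⌈|t|⌉₊).mono fun _ hn =>
    (clip_of_abs_le ((Nat.le_ceil _).trans (Nat.cast_le.2 hn))).symm

lemma continuous_clip (n : ℕ) : Continuous (clip n) :=
  continuous_const.max (continuous_id.min continuous_const)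

lemma LipschitzWith.clip_comp {X : Type*} [PseudoEMetricSpace X] {L : NNReal} {f : X → ℝ}
    (hf : LipschitzWith L f) (n : ℕ) : LipschitzWith L fun x => clip n (f x) :=
  (hf.min_const _).const_max _

section Integrals

variable {α : Type*} [MeasurableSpace α] {μ : Measure α}

lemma integral_exp_sub_const (g : α → ℝ) (c : ℝ) :
    ∫ x, exp (g x - c) ∂μ = (∫ x, exp (g x) ∂μ) * exp (-c) := by
  simp_rw [sub_eq_add_neg, exp_add]
  exact integral_mul_const _ _

lemma integrable_exp_of_le [IsFiniteMeasure μ] {g : α → ℝ} (hg : Measurable g) {C : ℝ}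
    (hC : ∀ x, g x ≤ C) : Integrable (fun x => exp (g x)) μ :=
  (integrable_const (exp C)).mono' hg.exp.aestronglyMeasurable <| ae_of_all _ fun x => by
    simpa only [norm_eq_abs, abs_exp, exp_le_exp] using hC x

lemma integrable_of_tendsto_of_integral_norm_le {E : Type*} [NormedAddCommGroup E]
    {u : ℕ → α → E} {v : α → E} {B : ℝ} (hu : ∀ n, Integrable (u n) μ)
    (hB : ∀ n, ∫ x, ‖u n x‖ ∂μ ≤ B) (hlim : ∀ᵐ x ∂μ, Tendsto (fun n => u n x) atTop (𝓝 (v x))) :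
    Integrable v μ := by
  refine ⟨aestronglyMeasurable_of_tendsto_ae _ (fun n => (hu n).1) hlim, ?_⟩
  calc ∫⁻ x, ‖v x‖ₑ ∂μ = ∫⁻ x, liminf (fun n => ‖u n x‖ₑ) atTop ∂μ :=
        lintegral_congr_ae (by filter_upwards [hlim] with x hx using hx.enorm.liminf_eq.symm)
    _ ≤ liminf (fun n => ∫⁻ x, ‖u n x‖ₑ ∂μ) atTop :=
        lintegral_liminf_le' fun n => (hu n).1.enorm
    _ ≤ ENNReal.ofReal B := liminf_le_of_frequently_le' <| Frequently.of_forall fun n => by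
        rw [← ofReal_integral_norm_eq_lintegral_enorm (hu n)]
        exact ENNReal.ofReal_le_ofReal (hB n)
    _ < ⊤ := ENNReal.ofReal_lt_top

end Integrals

lemma tendsto_integral_comp_clip {X : Type*} [PseudoEMetricSpace X] [MeasurableSpace X]
    [BorelSpace X] {μ : Measure X} {f : X → ℝ} (φ : ℝ → ℝ) (hφ : Continuous φ)
    (hf : Continuous f) {G : X → ℝ} (hG : Integrable G μ)
    (hbound : ∀ n x, ‖φ (clip n (f x))‖ ≤ G x) :
    Tendsto (fun n : ℕ => ∫ x, φ (clip n (f x)) ∂μ) atTop (𝓝 (∫ x, φ (f x) ∂μ)) :=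
  tendsto_integral_of_dominated_convergence G
    (fun n => (hφ.comp ((continuous_clip n).comp hf)).aestronglyMeasurable) hG
    (fun n => ae_of_all _ (hbound n))
    (ae_of_all _ fun x => (hφ.tendsto _).comp (tendsto_clip (f x)))

section GCB

variable {X : Type*} [PseudoEMetricSpace X] [MeasurableSpace X] {μ : Measure X} {f : X → ℝ}

/-- The condition GCB(𝒞; D) of the paper, with 𝒞 the bounded Lipschitz functions. -/
def BoundedLipschitzGCB (μ : Measure X) (D : ℝ) : Prop :=
  ∀ (L : NNReal) (f : X → ℝ), LipschitzWith L f → (∃ C, ∀ x, |f x| ≤ C) →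
    ∫ x, exp (f x - ∫ y, f y ∂μ) ∂μ ≤ exp (D * (L : ℝ) ^ 2)

namespace BoundedLipschitzGCB

variable {D : ℝ} {L : NNReal}

lemma integral_exp_le (hμ : BoundedLipschitzGCB μ D) (hf : LipschitzWith L f)
    (hb : ∃ C, ∀ x, |f x| ≤ C) :
    ∫ x, exp (f x) ∂μ ≤ exp (∫ x, f x ∂μ) * exp (D * (L : ℝ) ^ 2) := by
  have h := hμ L f hf hb
  rwa [integral_exp_sub_const, exp_neg, ← div_eq_mul_inv, div_le_iff₀ (exp_pos _), mul_comm] at h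

lemma integral_exp_mul_integral_exp_neg_le (hμ : BoundedLipschitzGCB μ D)
    (hf : LipschitzWith L f) (hb : ∃ C, ∀ x, |f x| ≤ C) :
    (∫ x, exp (f x) ∂μ) * ∫ x, exp (-f x) ∂μ ≤ exp (D * (L : ℝ) ^ 2) ^ 2 := by
  have hpos := hμ.integral_exp_le hf hb
  have hneg := hμ.integral_exp_le (f := fun x => -f x) hf.neg
    (hb.imp fun C hC x => (abs_neg (f x)).trans_le (hC x))
  rw [integral_neg] at hneg
  calc (∫ x, exp (f x) ∂μ) * ∫ x, exp (-f x) ∂μ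
      ≤ (exp (∫ x, f x ∂μ) * exp (D * L ^ 2)) * (exp (-∫ x, f x ∂μ) * exp (D * L ^ 2)) :=
        mul_le_mul hpos hneg (integral_nonneg fun _ => (exp_pos _).le) (by positivity)
    _ = exp (D * (L : ℝ) ^ 2) ^ 2 := by
        rw [mul_mul_mul_comm, ← exp_add, add_neg_cancel, exp_zero, one_mul, ← sq]

variable [BorelSpace X] [IsFiniteMeasure μ] [NeZero μ]

lemma integral_exp_clip_le (hμ : BoundedLipschitzGCB μ D) (hf : LipschitzWith L f) (n : ℕ) :
    ∫ x, exp (clip n (f x)) ∂μ ≤ exp (D * (L : ℝ) ^ 2) ^ 2 / ∫ x, exp (-|f x|) ∂μ := by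
  have hclip_cont : Continuous fun x => clip n (f x) := (continuous_clip n).comp hf.continuous
  have hexp_abs : Integrable (fun x => exp (-|f x|)) μ :=
    integrable_exp_of_le hf.continuous.abs.neg.measurable fun x => neg_nonpos.2 (abs_nonneg _)
  have hexp_clip : Integrable (fun x => exp (-clip n (f x))) μ :=
    integrable_exp_of_le hclip_cont.neg.measurable fun x =>
      (neg_le_abs _).trans (abs_clip_le_natCast n (f x))
  have hlower : ∫ x, exp (-|f x|) ∂μ ≤ ∫ x, exp (-clip n (f x)) ∂μ :=
    integral_mono hexp_abs hexp_clip fun x => exp_le_exp.2 <| neg_le_neg <|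
      (le_abs_self _).trans (abs_clip_le_abs n (f x))
  rw [le_div_iff₀ (integral_exp_pos hexp_abs)]
  calc (∫ x, exp (clip n (f x)) ∂μ) * ∫ x, exp (-|f x|) ∂μ
      ≤ (∫ x, exp (clip n (f x)) ∂μ) * ∫ x, exp (-clip n (f x)) ∂μ :=
        mul_le_mul_of_nonneg_left hlower (integral_nonneg fun _ => (exp_pos _).le)
    _ ≤ exp (D * (L : ℝ) ^ 2) ^ 2 :=
        hμ.integral_exp_mul_integral_exp_neg_le (hf.clip_comp n)
          ⟨n, fun x => abs_clip_le_natCast n (f x)⟩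

lemma integrable_exp (hμ : BoundedLipschitzGCB μ D) (hf : LipschitzWith L f) :
    Integrable (fun x => exp (f x)) μ :=
  integrable_of_tendsto_of_integral_norm_le (u := fun n x => exp (clip n (f x)))
    (fun n => integrable_exp_of_le ((continuous_clip n).comp hf.continuous).measurable
      fun x => (le_abs_self _).trans (abs_clip_le_natCast n (f x)))
    (fun n => by simpa only [norm_eq_abs, abs_exp] using hμ.integral_exp_clip_le hf n)
    (ae_of_all _ fun x => (continuous_exp.tendsto _).comp (tendsto_clip (f x)))

end BoundedLipschitzGCB

end GCB

theorem gcb_bounded_to_all_lipschitz_general {Ω : Type*} [NormedAddCommGroup Ω] [MeasurableSpace Ω]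
    [BorelSpace Ω]
    (μ : Measure Ω) [IsProbabilityMeasure μ] (D : ℝ)
    (hGCB : ∀ (L : NNReal) (f : Ω → ℝ), LipschitzWith L f → (∃ C, ∀ x, |f x| ≤ C) →
      ∫ x, Real.exp (f x - ∫ y, f y ∂μ) ∂μ ≤ Real.exp (D * (L : ℝ) ^ 2))
    (L : NNReal) (f : Ω → ℝ) (hf : LipschitzWith L f) :
    Integrable f μ ∧ Integrable (fun x => Real.exp (f x)) μ ∧
    Integrable (fun x => Real.exp (-f x)) μ ∧
    ∫ x, Real.exp (f x - ∫ y, f y ∂μ) ∂μ ≤ Real.exp (D * (L : ℝ) ^ 2) := by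
  have hexp : Integrable (fun x => exp (f x)) μ := BoundedLipschitzGCB.integrable_exp hGCB hf
  have hexp_neg : Integrable (fun x => exp (-f x)) μ :=
    BoundedLipschitzGCB.integrable_exp hGCB hf.neg
  have hcosh : Integrable (fun x => exp (f x) + exp (-f x)) μ := hexp.add hexp_neg
  have hint : Integrable f μ := hcosh.mono' hf.continuous.aestronglyMeasurable <|
    ae_of_all _ fun x => by
      rw [norm_eq_abs]
      exact (lt_add_one _).le.trans ((add_one_le_exp _).trans (exp_abs_le (f x)))
  refine ⟨hint, hexp, hexp_neg, ?_⟩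
  have hmean : Tendsto (fun n : ℕ => ∫ x, clip n (f x) ∂μ) atTop (𝓝 (∫ x, f x ∂μ)) :=
    tendsto_integral_comp_clip (fun t => t) continuous_id hf.continuous hint.norm
      fun n x => by simpa only [norm_eq_abs] using abs_clip_le_abs n (f x)
  have hmoment : Tendsto (fun n : ℕ => ∫ x, exp (clip n (f x)) ∂μ) atTop
      (𝓝 (∫ x, exp (f x) ∂μ)) :=
    tendsto_integral_comp_clip exp continuous_exp hf.continuous hcosh fun n x => by
      rw [norm_eq_abs, abs_exp]
      exact (exp_le_exp.2 ((le_abs_self _).trans (abs_clip_le_abs n (f x)))).trans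
        (exp_abs_le (f x))
  have hlim : Tendsto (fun n : ℕ => ∫ x, exp (clip n (f x) - ∫ y, clip n (f y) ∂μ) ∂μ) atTop
      (𝓝 (∫ x, exp (f x - ∫ y, f y ∂μ) ∂μ)) := by
    simp_rw [integral_exp_sub_const]
    exact hmoment.mul ((continuous_exp.tendsto _).comp hmean.neg)
  exact le_of_tendsto' hlim fun n =>
    hGCB L _ (hf.clip_comp n) ⟨n, fun x => abs_clip_le_natCast n (f x)⟩

/-- On a separable Banach space, if `μ` satisfies the Gaussian concentration bound with
constant `D` for all bounded Lipschitz functions, then it satisfies it with the same `D`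
for all Lipschitz functions (in particular `e^{±f}` are integrable). -/
theorem gcb_bounded_to_all_lipschitz {Ω : Type*} [NormedAddCommGroup Ω] [NormedSpace ℝ Ω]
    [CompleteSpace Ω] [TopologicalSpace.SeparableSpace Ω] [MeasurableSpace Ω] [BorelSpace Ω]
    (μ : Measure Ω) [IsProbabilityMeasure μ] (D : ℝ) (hD : 0 < D)
    (hGCB : ∀ (L : NNReal) (f : Ω → ℝ), LipschitzWith L f → (∃ C, ∀ x, |f x| ≤ C) →
      ∫ x, Real.exp (f x - ∫ y, f y ∂μ) ∂μ ≤ Real.exp (D * (L : ℝ) ^ 2))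
    (L : NNReal) (f : Ω → ℝ) (hf : LipschitzWith L f) :
    Integrable f μ ∧ Integrable (fun x => Real.exp (f x)) μ ∧
    Integrable (fun x => Real.exp (-f x)) μ ∧
    ∫ x, Real.exp (f x - ∫ y, f y ∂μ) ∂μ ≤ Real.exp (D * (L : ℝ) ^ 2) :=
  gcb_bounded_to_all_lipschitz_general μ D hGCB L f hf
end

section
/- Let a diffusion semigroup with carré du champ Γ satisfy the strong gradient bound √(Γ(S_t f)) ≤ e^{-ρt}S_t(√(Γ(f))), and suppose C₁^{-2}‖∇f‖² ≤ Γ(f) ≤ C₂²‖∇f‖² pointwise. Then for every smooth compactly supported f, ‖∇V_t(f)‖_∞ ≤ C₁C₂ e^{-ρt}‖∇f‖_∞, where V_t(f) = log S_t(e^f). -/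
open MeasureTheory Real

/-- Gradient bound for the nonlinear semigroup: if a diffusion semigroup `S` with carré du
champ `Γ` satisfies the strong gradient bound `√Γ(S_t g) ≤ e^{-ρt}S_t(√Γ(g))`, the
two-sided comparison `C₁⁻²‖∇g‖² ≤ Γ(g) ≤ C₂²‖∇g‖²`, the diffusive chain rule for `e^f`,
and `S_t` is positive, monotone and homogeneous, then for smooth compactly supported `f`
with `‖∇f‖ ≤ L`, the nonlinear semigroup `V_t(f) = log S_t(e^f)` satisfies
`‖∇V_t(f)‖_∞ ≤ C₁C₂e^{-ρt}·L`. -/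
theorem strong_gradient_bound_nonlinear_semigroup {d : ℕ}
    (S : ℝ → ((EuclideanSpace ℝ (Fin d)) → ℝ) → (EuclideanSpace ℝ (Fin d)) → ℝ)
    (Γ : ((EuclideanSpace ℝ (Fin d)) → ℝ) → (EuclideanSpace ℝ (Fin d)) → ℝ)
    (ρ C₁ C₂ : ℝ) (hC₁ : 0 < C₁) (hC₂ : 0 < C₂)
    (t : ℝ) (ht : 0 ≤ t)
    (f : (EuclideanSpace ℝ (Fin d)) → ℝ) (hf : ContDiff ℝ (⊤ : ℕ∞) f) (hsupp : HasCompactSupport f)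
    (L : ℝ) (hL : ∀ x, ‖gradient f x‖ ≤ L)
    (hΓl : ∀ (g : (EuclideanSpace ℝ (Fin d)) → ℝ) (x), Differentiable ℝ g →
      (C₁⁻¹) ^ 2 * ‖gradient g x‖ ^ 2 ≤ Γ g x)
    (hΓu : ∀ (g : (EuclideanSpace ℝ (Fin d)) → ℝ) (x), Γ g x ≤ C₂ ^ 2 * ‖gradient g x‖ ^ 2)
    (hΓnn : ∀ (g : (EuclideanSpace ℝ (Fin d)) → ℝ) (x), 0 ≤ Γ g x)
    (hSGB : ∀ (g : (EuclideanSpace ℝ (Fin d)) → ℝ) (x),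
      Real.sqrt (Γ (S t g) x) ≤ Real.exp (-ρ * t) * S t (fun y => Real.sqrt (Γ g y)) x)
    (hchain : ∀ x, Γ (fun y => Real.exp (f y)) x = Real.exp (f x) ^ 2 * Γ f x)
    (hSpos : ∀ x, 0 < S t (fun y => Real.exp (f y)) x)
    (hSdiff : Differentiable ℝ (S t (fun y => Real.exp (f y))))
    (hSmono : ∀ (g h : (EuclideanSpace ℝ (Fin d)) → ℝ), (∀ y, g y ≤ h y) →
      ∀ x, S t g x ≤ S t h x)
    (hShom : ∀ (c : ℝ) (g : (EuclideanSpace ℝ (Fin d)) → ℝ) (x),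
      S t (fun y => c * g y) x = c * S t g x) :
    ∀ x, ‖gradient (fun y => Real.log (S t (fun z => Real.exp (f z)) y)) x‖ ≤
      C₁ * C₂ * Real.exp (-ρ * t) * L := by

  intro x
  set u := S t (fun z => Real.exp (f z)) with hu
  have hux : 0 < u x := hSpos x
  have hL0 : 0 ≤ L := le_trans (norm_nonneg _) (hL x)
  -- gradient of log ∘ u
  have hgrad : gradient (fun y => Real.log (u y)) x = (u x)⁻¹ • gradient u x := by
    have h1 : HasFDerivAt u (fderiv ℝ u x) x := (hSdiff x).hasFDerivAt
    have h2 : HasDerivAt Real.log (u x)⁻¹ (u x) := Real.hasDerivAt_log hux.ne'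
    have h3 : HasFDerivAt (fun y => Real.log (u y)) ((u x)⁻¹ • fderiv ℝ u x) x :=
      h2.comp_hasFDerivAt x h1
    rw [gradient, h3.fderiv, gradient]
    exact LinearIsometryEquiv.map_smul _ _
  have hnorm : ‖gradient (fun y => Real.log (u y)) x‖ = (u x)⁻¹ * ‖gradient u x‖ := by
    rw [hgrad, norm_smul, norm_inv, Real.norm_of_nonneg hux.le]
  -- ‖∇u‖ ≤ C₁ √(Γ u)
  have h4 : ‖gradient u x‖ ≤ C₁ * Real.sqrt (Γ u x) := by
    have h := Real.sqrt_le_sqrt (hΓl u x hSdiff)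
    rw [Real.sqrt_mul (by positivity), Real.sqrt_sq (by positivity),
      Real.sqrt_sq (norm_nonneg _)] at h
    calc ‖gradient u x‖ = C₁ * (C₁⁻¹ * ‖gradient u x‖) := by
          field_simp
      _ ≤ C₁ * Real.sqrt (Γ u x) := by
          exact mul_le_mul_of_nonneg_left h hC₁.le
  -- pointwise bound on √(Γ(e^f))
  have h6 : ∀ y, Real.sqrt (Γ (fun z => Real.exp (f z)) y) ≤ C₂ * L * Real.exp (f y) := by
    intro y
    rw [hchain y, Real.sqrt_mul (sq_nonneg _), Real.sqrt_sq (Real.exp_pos _).le]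
    have hfy : Real.sqrt (Γ f y) ≤ C₂ * L := by
      have h := Real.sqrt_le_sqrt (hΓu f y)
      rw [Real.sqrt_mul (by positivity), Real.sqrt_sq hC₂.le,
        Real.sqrt_sq (norm_nonneg _)] at h
      exact h.trans (mul_le_mul_of_nonneg_left (hL y) hC₂.le)
    nlinarith [Real.exp_pos (f y), Real.sqrt_nonneg (Γ f y)]
  -- semigroup bound
  have h7 : S t (fun y => Real.sqrt (Γ (fun z => Real.exp (f z)) y)) x ≤ C₂ * L * u x := by
    have := hSmono (fun y => Real.sqrt (Γ (fun z => Real.exp (f z)) y))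
      (fun y => C₂ * L * Real.exp (f y)) h6 x
    rwa [hShom] at this
  have h5 := hSGB (fun z => Real.exp (f z)) x
  have h8 : ‖gradient u x‖ ≤ C₁ * C₂ * Real.exp (-ρ * t) * L * u x := by
    have hexp : (0:ℝ) < Real.exp (-ρ * t) := Real.exp_pos _
    calc ‖gradient u x‖ ≤ C₁ * Real.sqrt (Γ u x) := h4
      _ ≤ C₁ * (Real.exp (-ρ * t) *
          S t (fun y => Real.sqrt (Γ (fun z => Real.exp (f z)) y)) x) :=
          mul_le_mul_of_nonneg_left h5 hC₁.le
      _ ≤ C₁ * (Real.exp (-ρ * t) * (C₂ * L * u x)) := by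
          have := mul_le_mul_of_nonneg_left h7 hexp.le
          exact mul_le_mul_of_nonneg_left this hC₁.le
      _ = C₁ * C₂ * Real.exp (-ρ * t) * L * u x := by ring
  rw [hnorm, inv_mul_le_iff₀ hux]
  calc ‖gradient u x‖ ≤ C₁ * C₂ * Real.exp (-ρ * t) * L * u x := h8
    _ = u x * (C₁ * C₂ * Real.exp (-ρ * t) * L) := by ring
end
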